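/- Suppose {X_α, φ_{βα}} is a strong Mittag-Leffler inverse system of Hausdorff uniform spaces and f_α : X_α → Y are compatible maps into a fixed uniform space Y (i.e., f_α ∘ φ_{βα} = f_β for β ≥ α), each of which generates the uniform structure on Y, has chain lifting, has approximate uniqueness of chain lifts, and has complete fibers. Then the induced map f = lim f_α : lim X_α → Y generates the uniform structure on Y, has chain lifting, has approximate uniqueness of chain lifts, and has complete fibers. -/

import Mathlib

open Filter Set

universe u v

section Chains

variable {X : Type u} {Y : Type v}

/-- `c` is an `E`-chain: consecutive members of the list lie in `E`. -/
def IsEChain (E : Set (X × X)) (c : List X) : Prop :=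
  c.Chain' (fun a b => (a, b) ∈ E)

/-- Two chains (necessarily of the same length) are `E`-close. -/
def EClose (E : Set (X × X)) (c d : List X) : Prop :=
  List.Forall₂ (fun a b => (a, b) ∈ E) c d

variable [UniformSpace X] [UniformSpace Y]

/-- `f` generates the uniform structure on `Y`: it is uniformly continuous,
surjective, and images of entourages are entourages. -/
def GeneratesUS (f : X → Y) : Prop :=
  UniformContinuous f ∧ Function.Surjective f ∧
    ∀ E ∈ uniformity X, Prod.map f f '' E ∈ uniformity Y

/-- `f` has chain lifting. -/
def ChainLifting (f : X → Y) : Prop :=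
  ∀ E ∈ uniformity X, ∃ F ∈ uniformity X, ∀ x : X, ∀ c : List Y,
    IsEChain (Prod.map f f '' F) c → c.head? = some (f x) →
      ∃ d : List X, IsEChain E d ∧ d.head? = some x ∧ d.map f = c

/-- `f` has uniqueness of chain lifts. -/
def UniqueChainLifts (f : X → Y) : Prop :=
  ∀ E ∈ uniformity X, ∃ F ∈ uniformity X, F ⊆ E ∧ ∀ c d : List X,
    IsEChain F c → IsEChain F d → c.head? = d.head? → c.map f = d.map f → c = d

/-- `f` has approximate uniqueness of chain lifts. -/
def ApproxUniqueChainLifts (f : X → Y) : Prop :=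
  ∀ E ∈ uniformity X, ∃ F ∈ uniformity X, F ⊆ E ∧ ∀ c d : List X,
    IsEChain F c → IsEChain F d → c.head? = d.head? → c.map f = d.map f → EClose E c d

/-- `f` has strong approximate uniqueness of chain lifts. -/
def StrongApproxUniqueChainLifts (f : X → Y) : Prop :=
  ∀ E ∈ uniformity X, ∃ F ∈ uniformity X, F ⊆ E ∧ ∀ c d : List X,
    IsEChain F c → IsEChain F d → c.head? = d.head? → c.map f = d.map f → EClose F c d

/-- `f` is a uniform covering map. -/
def IsUCM (f : X → Y) : Prop :=
  GeneratesUS f ∧ ChainLifting f ∧ UniqueChainLifts f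

/-- `h` has `F`-bounded fibers. -/
def BoundedFibers {Z : Type*} (F : Set (X × X)) (h : X → Z) : Prop :=
  ∀ a b : X, h a = h b → (a, b) ∈ F

/-- `f` has complete fibers (each fiber, with the subspace uniformity, is complete). -/
def CompleteFibers (f : X → Y) : Prop :=
  ∀ y : Y, IsComplete (f ⁻¹' {y})

/-- `f` is approximated by uniform covering maps. -/
def ApproxByUCMs (f : X → Y) : Prop :=
  ∀ E ∈ uniformity X, ∃ F ∈ uniformity X, F ⊆ E ∧
    ∃ (Z : Type (max u v)) (_ : UniformSpace Z) (h : X → Z) (g : Z → Y),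
      (∀ x, g (h x) = f x) ∧ IsUCM g ∧ BoundedFibers F h

end Chains

/-- An inverse system of uniform spaces over a preordered index set, with
uniformly continuous bonding maps `bond i j h : Xs j → Xs i` for `i ≤ j`. -/
structure InvSys (ι : Type*) [Preorder ι] (Xs : ι → Type*)
    [∀ i, UniformSpace (Xs i)] where
  bond : ∀ i j, i ≤ j → Xs j → Xs i
  uc : ∀ i j (h : i ≤ j), UniformContinuous (bond i j h)
  bond_self : ∀ i (x : Xs i), bond i i le_rfl x = x
  bond_comp : ∀ i j k (hij : i ≤ j) (hjk : j ≤ k) (x : Xs k),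
    bond i j hij (bond j k hjk x) = bond i k (hij.trans hjk) x

/-- The inverse limit (the set of threads), carrying the inverse limit uniformity:
the subspace uniformity of the product uniformity, whose basic entourages are
preimages of entourages under the projections (since the index set is directed). -/
abbrev InvLim {ι : Type*} [Preorder ι] {Xs : ι → Type*} [∀ i, UniformSpace (Xs i)]
    (S : InvSys ι Xs) : Type _ :=
  { x : ∀ i, Xs i // ∀ i j (h : i ≤ j), S.bond i j h (x j) = x i }

/-- The strong Mittag-Leffler property of an inverse system. -/
def StrongML {ι : Type*} [Preorder ι] {Xs : ι → Type*} [∀ i, UniformSpace (Xs i)]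
    (S : InvSys ι Xs) : Prop :=
  ∀ i : ι, ∃ j : ι, ∃ h : i ≤ j,
    Set.range (S.bond i j h) = Set.range (fun x : InvLim S => x.1 i)

/-!
Since the index set is directed, every entourage of `lim X_α` contains the pull-back
`π_i⁻¹ D` of an entourage `D` of a single level `X_i`. Strong Mittag-Leffler supplies
`j ≥ i` such that every point `a` of `X_j` has a thread `s a` with `π_i (s a) = φ_{ji} a`,
and `s` may be chosen to send `π_j x` back to any given thread `x`. Then `f ∘ s = f_j`, and
`s` maps the entourage `φ_{ji}⁻¹ D` of `X_j` into `π_i⁻¹ D`, so surjectivity, the image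
property and chain lifting pass from `f_j` to `f` through `s`. Approximate uniqueness only
needs projecting chains to level `i`. Finally the fiber of `f` over `y` is the set of
threads inside the product of the complete fibers of the `f_i`, which is closed because
the `X_i` are Hausdorff.
-/

section Chains

variable {X Z : Type*} {E : Set (X × X)}

theorem IsEChain.mono {E' : Set (X × X)} (h : E ⊆ E') {c : List X} (hc : IsEChain E c) :
    IsEChain E' c :=
  List.IsChain.imp (fun _ _ hab => h hab) hc

theorem isEChain_map_iff {E : Set (Z × Z)} {g : X → Z} {c : List X} :
    IsEChain E (c.map g) ↔ IsEChain (Prod.map g g ⁻¹' E) c :=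
  List.isChain_map g

theorem eClose_map_iff {E : Set (Z × Z)} {g : X → Z} {c d : List X} :
    EClose E (c.map g) (d.map g) ↔ EClose (Prod.map g g ⁻¹' E) c d := by
  rw [EClose, List.forall₂_map_left_iff, List.forall₂_map_right_iff]
  rfl

theorem EClose.mono {E' : Set (X × X)} (h : E ⊆ E') {c d : List X} (hcd : EClose E c d) :
    EClose E' c d :=
  hcd.imp fun _ _ hab => h hab

end Chains

theorem isComplete_univ_pi {ι : Type*} {α : ι → Type*} [∀ i, UniformSpace (α i)]
    {s : ∀ i, Set (α i)} (hs : ∀ i, IsComplete (s i)) : IsComplete (univ.pi s) := by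
  intro l hl hls
  have hcoord : ∀ i, ∃ x ∈ s i, map (Function.eval i) l ≤ nhds x := fun i =>
    hs i _ (hl.map (Pi.uniformContinuous_proj α i)) <| le_principal_iff.2 <|
      mem_map.2 <| mem_of_superset (le_principal_iff.1 hls) fun x hx => hx i (mem_univ i)
  choose x hxs hxl using hcoord
  exact ⟨x, fun i _ => hxs i, tendsto_pi_nhds.2 hxl⟩

theorem IsComplete.inter_isClosed {α : Type*} [UniformSpace α] {s t : Set α}
    (hs : IsComplete s) (ht : IsClosed t) : IsComplete (s ∩ t) := by
  intro l hl hlst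
  obtain ⟨x, hxs, hxl⟩ := hs l hl (hlst.trans (principal_mono.2 inter_subset_left))
  have hlt : ∀ᶠ y in l, y ∈ t :=
    le_principal_iff.1 (hlst.trans (principal_mono.2 inter_subset_right))
  have := hl.1
  exact ⟨x, ⟨hxs, ht.mem_of_tendsto hxl hlt⟩, hxl⟩

namespace InvSys

variable {ι : Type*} [Preorder ι] {Xs : ι → Type*} [∀ i, UniformSpace (Xs i)]
  (S : InvSys ι Xs)

def proj (i : ι) (x : InvLim S) : Xs i := x.1 i

theorem bond_proj {i j : ι} (h : i ≤ j) (x : InvLim S) :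
    S.bond i j h (S.proj j x) = S.proj i x :=
  x.2 i j h

theorem uniformContinuous_proj (i : ι) : UniformContinuous (S.proj i) :=
  (Pi.uniformContinuous_proj Xs i).comp uniformContinuous_subtype_val

theorem uniformity_eq :
    uniformity (InvLim S) = ⨅ i, comap (Prod.map (S.proj i) (S.proj i)) (uniformity (Xs i)) := by
  rw [uniformity_subtype, Pi.uniformity, comap_iInf]
  exact iInf_congr fun i => by rw [comap_comap]; rfl

theorem preimage_proj_mem_uniformity (i : ι) {D : Set (Xs i × Xs i)}
    (hD : D ∈ uniformity (Xs i)) :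
    Prod.map (S.proj i) (S.proj i) ⁻¹' D ∈ uniformity (InvLim S) :=
  S.uniformContinuous_proj i hD

theorem comap_proj_uniformity_antitone {i j : ι} (h : i ≤ j) :
    comap (Prod.map (S.proj j) (S.proj j)) (uniformity (Xs j)) ≤
      comap (Prod.map (S.proj i) (S.proj i)) (uniformity (Xs i)) := by
  have hfactor : Prod.map (S.proj i) (S.proj i) =
      Prod.map (S.bond i j h) (S.bond i j h) ∘ Prod.map (S.proj j) (S.proj j) :=
    funext fun p => by simp only [Function.comp_apply, Prod.map, bond_proj]
  rw [hfactor, ← comap_comap]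
  exact comap_mono (S.uc i j h).le_comap

theorem exists_preimage_proj_subset [IsDirected ι (· ≤ ·)] [Nonempty ι]
    {E : Set (InvLim S × InvLim S)} (hE : E ∈ uniformity (InvLim S)) :
    ∃ i, ∃ D ∈ uniformity (Xs i), Prod.map (S.proj i) (S.proj i) ⁻¹' D ⊆ E := by
  have hdir : Directed (· ≥ ·)
      fun i => comap (Prod.map (S.proj i) (S.proj i)) (uniformity (Xs i)) := fun i j =>
    let ⟨k, hik, hjk⟩ := directed_of (· ≤ ·) i j
    ⟨k, S.comap_proj_uniformity_antitone hik, S.comap_proj_uniformity_antitone hjk⟩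
  obtain ⟨i, hi⟩ := (mem_iInf_of_directed hdir E).1 (S.uniformity_eq ▸ hE)
  obtain ⟨D, hD, hDE⟩ := mem_comap.1 hi
  exact ⟨i, D, hD, hDE⟩

theorem isClosed_threads [∀ i, T2Space (Xs i)] :
    IsClosed {x : ∀ i, Xs i | ∀ i j (h : i ≤ j), S.bond i j h (x j) = x i} := by
  simp only [ofPred_forall]
  exact isClosed_iInter fun i => isClosed_iInter fun j => isClosed_iInter fun h =>
    isClosed_eq ((S.uc i j h).continuous.comp (continuous_apply j)) (continuous_apply i)

end InvSys

section StrongMittagLeffler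

variable {ι : Type*} [Preorder ι] {Xs : ι → Type*} [∀ i, UniformSpace (Xs i)]
  {S : InvSys ι Xs}

theorem StrongML.exists_section (hml : StrongML S) (i : ι) :
    ∃ j, ∃ h : i ≤ j, ∃ s : Xs j → InvLim S, ∀ a, S.proj i (s a) = S.bond i j h a := by
  obtain ⟨j, h, hrange⟩ := hml i
  have hthread : ∀ a, ∃ x : InvLim S, S.proj i x = S.bond i j h a := fun a =>
    hrange.subset (mem_range_self a)
  choose s hs using hthread
  exact ⟨j, h, s, hs⟩

theorem StrongML.exists_section_through (hml : StrongML S) (i : ι) :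
    ∃ j, ∃ h : i ≤ j, ∀ x : InvLim S, ∃ s : Xs j → InvLim S,
      (∀ a, S.proj i (s a) = S.bond i j h a) ∧ s (S.proj j x) = x := by
  classical
  obtain ⟨j, h, s, hs⟩ := hml.exists_section i
  refine ⟨j, h, fun x => ⟨Function.update s (S.proj j x) x, fun a => ?_, by simp⟩⟩
  rcases eq_or_ne a (S.proj j x) with rfl | ha
  · simp [S.bond_proj]
  · simp [ha, hs]

end StrongMittagLeffler

namespace InvSys

variable {ι : Type*} [Preorder ι] {Xs : ι → Type*} [∀ i, UniformSpace (Xs i)]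
  {S : InvSys ι Xs} {Y : Type*} {fι : ∀ i, Xs i → Y} {f : InvLim S → Y}

theorem apply_section_eq
    (hcompat : ∀ i j (h : i ≤ j) (x : Xs j), fι i (S.bond i j h x) = fι j x)
    (hf : ∀ (i : ι) (x : InvLim S), f x = fι i (x.1 i)) {i j : ι} {h : i ≤ j}
    {s : Xs j → InvLim S} (hs : ∀ a, S.proj i (s a) = S.bond i j h a) (a : Xs j) :
    f (s a) = fι j a := by
  rw [hf i, ← hcompat i j h, ← hs]
  rfl

theorem surjective_of_strongML [Nonempty ι] (hml : StrongML S)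
    (hcompat : ∀ i j (h : i ≤ j) (x : Xs j), fι i (S.bond i j h x) = fι j x)
    (hf : ∀ (i : ι) (x : InvLim S), f x = fι i (x.1 i))
    (hsurj : ∀ i, Function.Surjective (fι i)) : Function.Surjective f := by
  obtain ⟨j, h, s, hs⟩ := hml.exists_section (Classical.arbitrary ι)
  have hfs : f ∘ s = fι j := funext (apply_section_eq hcompat hf hs)
  exact Function.Surjective.of_comp (hfs ▸ hsurj j)

theorem chainLifting_of_strongML [IsDirected ι (· ≤ ·)] [Nonempty ι] (hml : StrongML S)
    (hcompat : ∀ i j (h : i ≤ j) (x : Xs j), fι i (S.bond i j h x) = fι j x)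
    (hf : ∀ (i : ι) (x : InvLim S), f x = fι i (x.1 i))
    (hcl : ∀ i, ChainLifting (fι i)) : ChainLifting f := by
  intro E hE
  obtain ⟨i, D, hD, hDE⟩ := S.exists_preimage_proj_subset hE
  obtain ⟨j, h, hsec⟩ := hml.exists_section_through i
  obtain ⟨F, hF, hlift⟩ := hcl j _ (S.uc i j h hD)
  refine ⟨_, S.preimage_proj_mem_uniformity j hF, fun x c hc hhead => ?_⟩
  obtain ⟨s, hs, hsx⟩ := hsec x
  have hfj : f = fι j ∘ S.proj j := funext (hf j)
  have hcj : IsEChain (Prod.map (fι j) (fι j) '' F) c := by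
    refine hc.mono ?_
    rw [hfj, ← Prod.map_comp_map, image_comp]
    exact image_mono (image_preimage_subset _ _)
  obtain ⟨d, hd, hdhead, hdmap⟩ := hlift (S.proj j x) c hcj (by rw [hhead, hf j]; rfl)
  have hsD : Prod.map (S.bond i j h) (S.bond i j h) ⁻¹' D ⊆ Prod.map s s ⁻¹' E :=
    fun p hp => hDE (by simpa only [mem_preimage, Prod.map, hs] using hp)
  refine ⟨d.map s, isEChain_map_iff.2 (hd.mono hsD), ?_, ?_⟩
  · rw [List.head?_map, hdhead, Option.map_some, hsx]
  · rw [List.map_map, ← hdmap]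
    exact List.map_congr_left fun a _ => apply_section_eq hcompat hf hs a

theorem image_mem_uniformity_of_strongML [IsDirected ι (· ≤ ·)] [Nonempty ι] [UniformSpace Y]
    (hml : StrongML S)
    (hcompat : ∀ i j (h : i ≤ j) (x : Xs j), fι i (S.bond i j h x) = fι j x)
    (hf : ∀ (i : ι) (x : InvLim S), f x = fι i (x.1 i))
    (himage : ∀ i, ∀ D ∈ uniformity (Xs i), Prod.map (fι i) (fι i) '' D ∈ uniformity Y)
    {E : Set (InvLim S × InvLim S)} (hE : E ∈ uniformity (InvLim S)) :
    Prod.map f f '' E ∈ uniformity Y := by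
  obtain ⟨i, D, hD, hDE⟩ := S.exists_preimage_proj_subset hE
  obtain ⟨j, h, s, hs⟩ := hml.exists_section i
  refine mem_of_superset (himage j _ (S.uc i j h hD)) ?_
  rintro _ ⟨⟨a, b⟩, hab, rfl⟩
  refine ⟨(s a, s b), hDE ?_, ?_⟩
  · simpa only [mem_preimage, Prod.map, hs] using hab
  · simp only [Prod.map, apply_section_eq hcompat hf hs]

theorem approxUniqueChainLifts_of_proj [IsDirected ι (· ≤ ·)] [Nonempty ι]
    (hf : ∀ (i : ι) (x : InvLim S), f x = fι i (x.1 i))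
    (hau : ∀ i, ApproxUniqueChainLifts (fι i)) : ApproxUniqueChainLifts f := by
  intro E hE
  obtain ⟨i, D, hD, hDE⟩ := S.exists_preimage_proj_subset hE
  obtain ⟨F, hF, -, hclose⟩ := hau i D hD
  refine ⟨_ ∩ E, inter_mem (S.preimage_proj_mem_uniformity i hF) hE, inter_subset_right,
    fun c d hc hd hhead hmap => ?_⟩
  have hfi : f = fι i ∘ S.proj i := funext (hf i)
  have hcdi : EClose D (c.map (S.proj i)) (d.map (S.proj i)) :=
    hclose _ _ (isEChain_map_iff.2 (hc.mono inter_subset_left))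
      (isEChain_map_iff.2 (hd.mono inter_subset_left))
      (by rw [List.head?_map, List.head?_map, hhead])
      (by rw [List.map_map, List.map_map, ← hfi, hmap])
  exact (eClose_map_iff.1 hcdi).mono hDE

theorem completeFibers_of_proj [Nonempty ι] [∀ i, T2Space (Xs i)]
    (hf : ∀ (i : ι) (x : InvLim S), f x = fι i (x.1 i))
    (hcf : ∀ i, CompleteFibers (fι i)) : CompleteFibers f := by
  intro y
  have hfiber : Subtype.val '' (f ⁻¹' {y}) =
      univ.pi (fun i => fι i ⁻¹' {y}) ∩
        {x | ∀ i j (h : i ≤ j), S.bond i j h (x j) = x i} := by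
    ext x
    constructor
    · rintro ⟨x, hx, rfl⟩
      exact ⟨fun i _ => (hf i x).symm.trans hx, x.2⟩
    · rintro ⟨hx, hthread⟩
      exact ⟨⟨x, hthread⟩, (hf _ _).trans (hx (Classical.arbitrary ι) trivial), rfl⟩
  rw [Subtype.isComplete_iff, hfiber]
  exact (isComplete_univ_pi fun i => hcf i y).inter_isClosed S.isClosed_threads

end InvSys

/-- The inverse limit of a strong Mittag-Leffler inverse system of Hausdorff
uniform spaces with compatible generalized uniform covering maps (with complete
fibers) to a fixed uniform space `Y` is again such a map: it generates the
uniform structure on `Y`, has chain lifting, has approximate uniqueness of chain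
lifts, and has complete fibers. -/
theorem invLim_generalizedUCM
    {ι : Type*} [Preorder ι] [IsDirected ι (· ≤ ·)] [Nonempty ι]
    {Xs : ι → Type*} [∀ i, UniformSpace (Xs i)] [∀ i, T2Space (Xs i)]
    {Y : Type*} [UniformSpace Y]
    (S : InvSys ι Xs) (hml : StrongML S)
    (fι : ∀ i, Xs i → Y)
    (hcompat : ∀ i j (h : i ≤ j) (x : Xs j), fι i (S.bond i j h x) = fι j x)
    (hgen : ∀ i, GeneratesUS (fι i))
    (hcl : ∀ i, ChainLifting (fι i))
    (hau : ∀ i, ApproxUniqueChainLifts (fι i))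
    (hcf : ∀ i, CompleteFibers (fι i))
    (f : InvLim S → Y)
    (hf : ∀ (i : ι) (x : InvLim S), f x = fι i (x.1 i)) :
    GeneratesUS f ∧ ChainLifting f ∧ ApproxUniqueChainLifts f ∧ CompleteFibers f := by
  obtain ⟨i₀⟩ := ‹Nonempty ι›
  have huc : UniformContinuous f := by
    rw [show f = fι i₀ ∘ S.proj i₀ from funext (hf i₀)]
    exact (hgen i₀).1.comp (S.uniformContinuous_proj i₀)
  exact ⟨⟨huc, InvSys.surjective_of_strongML hml hcompat hf fun i => (hgen i).2.1,
      fun _ => InvSys.image_mem_uniformity_of_strongML hml hcompat hf fun i => (hgen i).2.2⟩,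
    InvSys.chainLifting_of_strongML hml hcompat hf hcl,
    InvSys.approxUniqueChainLifts_of_proj hf hau,
    InvSys.completeFibers_of_proj hf hcf⟩
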